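/- Let p ∈ (1,∞) with conjugate exponent q = p/(p−1), let α ≥ 0, and let A : Ω → ℂ^{d×d} be measurable and essentially bounded with Δ_p(A − α·(pq/4)·I_d) > 0. Then Δ_p(A* − α·(pq/4)·I_d) > 0, where A*(x) denotes the conjugate transpose of A(x). -/

import Mathlib

open MeasureTheory

/-- Squared Euclidean norm of a complex vector. -/
noncomputable def enorm2 {d : ℕ} (ξ : Fin d → ℂ) : ℝ := ∑ j, Complex.normSq (ξ j)

/-- The quantity `Re⟨Mξ, ξ + |1 - 2/p| ξ̄⟩`, where `⟨z,w⟩ = ∑ⱼ zⱼ conj(wⱼ)`. -/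
noncomputable def deltaForm {d : ℕ} (p : ℝ) (M : Matrix (Fin d) (Fin d) ℂ)
    (ξ : Fin d → ℂ) : ℝ :=
  (∑ j, M.mulVec ξ j *
    (starRingEnd ℂ) (ξ j + Complex.ofReal |1 - 2 / p| * (starRingEnd ℂ) (ξ j))).re

lemma mulVec_mul {d : ℕ} (M : Matrix (Fin d) (Fin d) ℂ) (a : ℂ) (v : Fin d → ℂ) (j : Fin d) :
    M.mulVec (fun k => a * v k) j = a * M.mulVec v j := by
  simp only [Matrix.mulVec, dotProduct, Finset.mul_sum]
  exact Finset.sum_congr rfl fun k _ => by ring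

lemma lam_lt_one {p : ℝ} (hp : 1 < p) : |1 - 2 / p| < 1 := by
  have hppos : (0:ℝ) < p := lt_trans one_pos hp
  have h2p : (0:ℝ) < 2 / p := by positivity
  have h2p2 : 2 / p < 2 := by rw [div_lt_iff₀ hppos]; nlinarith
  rw [abs_lt]; constructor <;> linarith

/-- Key identity: `deltaForm p Mᴴ ξ = deltaForm p M η` with `η = i(ξ + λξ̄)/√(1-λ²)`. -/
lemma deltaForm_conjTranspose {d : ℕ} {p : ℝ} (hp : 1 < p)
    (M : Matrix (Fin d) (Fin d) ℂ) (ξ : Fin d → ℂ) :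
    deltaForm p M.conjTranspose ξ =
      deltaForm p M (fun j =>
        ((Real.sqrt (1 - |1 - 2 / p| ^ 2) : ℝ) : ℂ)⁻¹ * Complex.I *
          (ξ j + Complex.ofReal |1 - 2 / p| * (starRingEnd ℂ) (ξ j))) := by
  have hlam0 : (0:ℝ) ≤ |1 - 2 / p| := abs_nonneg _
  have hlam1 : |1 - 2 / p| < 1 := lam_lt_one hp
  set lam : ℝ := |1 - 2 / p| with hlamdef
  have hpos : (0:ℝ) < 1 - lam ^ 2 := by nlinarith
  have hs2 : Real.sqrt (1 - lam ^ 2) ^ 2 = 1 - lam ^ 2 := Real.sq_sqrt hpos.le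
  have hspos : 0 < Real.sqrt (1 - lam ^ 2) := Real.sqrt_pos.2 hpos
  set s : ℝ := Real.sqrt (1 - lam ^ 2) with hsdef
  set L : ℂ := Complex.ofReal lam with hLdef
  set c : ℂ := ((s : ℝ) : ℂ)⁻¹ * Complex.I with hcdef
  set σ : Fin d → ℂ := fun j => ξ j + L * (starRingEnd ℂ) (ξ j) with hσdef
  set η : Fin d → ℂ := fun j => c * σ j with hηdef
  have hsne : ((s:ℝ):ℂ) ≠ 0 := by exact_mod_cast hspos.ne'
  have hs2c : ((s:ℝ):ℂ) ^ 2 = 1 - L ^ 2 := by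
    rw [← Complex.ofReal_pow, hs2, hLdef]; push_cast; ring
  have hconjc : (starRingEnd ℂ) c = -c := by
    simp [hcdef, map_mul, map_inv₀, Complex.conj_ofReal, Complex.conj_I]
  have hconjL : (starRingEnd ℂ) L = L := Complex.conj_ofReal _
  have hηc : ∀ j, η j + L * (starRingEnd ℂ) (η j) = c * ((1 - L ^ 2) * ξ j) := by
    intro j
    have h1 : (starRingEnd ℂ) (η j) = -c * ((starRingEnd ℂ) (ξ j) + L * ξ j) := by
      simp only [hηdef, map_mul, hconjc, hσdef, map_add, hconjL, Complex.conj_conj]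
    rw [h1]; simp only [hηdef, hσdef]; ring
  have hηc' : ∀ j, (starRingEnd ℂ) (η j + L * (starRingEnd ℂ) (η j))
      = -c * ((1 - L ^ 2) * (starRingEnd ℂ) (ξ j)) := by
    intro j
    rw [hηc j, map_mul, hconjc, map_mul, map_sub, map_one, map_pow, hconjL]
  have hone : c * (-c * (1 - L ^ 2)) = 1 := by
    have h1 : c ^ 2 = -(((s:ℝ):ℂ) ^ 2)⁻¹ := by
      rw [hcdef, mul_pow, Complex.I_sq]; ring
    calc c * (-c * (1 - L ^ 2)) = -(c ^ 2) * (1 - L ^ 2) := by ring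
    _ = (((s:ℝ):ℂ) ^ 2)⁻¹ * ((s:ℝ):ℂ) ^ 2 := by rw [h1, hs2c]; ring
    _ = 1 := inv_mul_cancel₀ (pow_ne_zero _ hsne)
  have hmv : ∀ j, M.mulVec η j = c * M.mulVec σ j := fun j => mulVec_mul M c σ j
  have hRHS : deltaForm p M η = (∑ j, M.mulVec σ j * (starRingEnd ℂ) (ξ j)).re := by
    unfold deltaForm
    rw [← hlamdef]
    congr 1
    refine Finset.sum_congr rfl fun j _ => ?_
    rw [show (Complex.ofReal lam) = L from rfl, hmv j, hηc' j]
    calc c * M.mulVec σ j * (-c * ((1 - L ^ 2) * (starRingEnd ℂ) (ξ j)))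
        = c * (-c * (1 - L ^ 2)) * (M.mulVec σ j * (starRingEnd ℂ) (ξ j)) := by ring
      _ = M.mulVec σ j * (starRingEnd ℂ) (ξ j) := by rw [hone, one_mul]
  have hLHS : deltaForm p M.conjTranspose ξ
      = (∑ j, M.mulVec σ j * (starRingEnd ℂ) (ξ j)).re := by
    unfold deltaForm
    rw [← hlamdef]
    rw [← Complex.conj_re]
    congr 1
    rw [map_sum]
    simp only [Matrix.mulVec, dotProduct, Matrix.conjTranspose_apply, map_mul, map_sum,
      map_add, Complex.conj_conj, Complex.conj_ofReal]
    simp only [Finset.sum_mul]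
    rw [Finset.sum_comm]
    refine Finset.sum_congr rfl fun j _ => Finset.sum_congr rfl fun k _ => ?_
    simp only [hσdef, hLdef, Complex.star_def, Complex.conj_conj]
    ring
  rw [hLHS, ← hRHS]

lemma deltaForm_smul {d : ℕ} (p t : ℝ) (M : Matrix (Fin d) (Fin d) ℂ) (ζ : Fin d → ℂ) :
    deltaForm p M (fun j => ((t:ℝ):ℂ) * ζ j) = t ^ 2 * deltaForm p M ζ := by
  unfold deltaForm
  rw [← Complex.re_ofReal_mul, Complex.ofReal_pow, Finset.mul_sum]
  congr 1
  refine Finset.sum_congr rfl fun j _ => ?_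
  rw [mulVec_mul]
  simp only [map_add, map_mul, Complex.conj_ofReal, Complex.conj_conj]
  ring

lemma enorm2_smul {d : ℕ} (t : ℝ) (ζ : Fin d → ℂ) :
    enorm2 (fun j => ((t:ℝ):ℂ) * ζ j) = t ^ 2 * enorm2 ζ := by
  simp only [enorm2, Complex.normSq_mul, Complex.normSq_ofReal, Finset.mul_sum]
  exact Finset.sum_congr rfl fun j _ => by ring

lemma norm_comp_le_one {d : ℕ} {ζ : Fin d → ℂ} (h : enorm2 ζ = 1) (k : Fin d) : ‖ζ k‖ ≤ 1 := by
  have h1 : Complex.normSq (ζ k) ≤ enorm2 ζ :=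
    Finset.single_le_sum (fun i _ => Complex.normSq_nonneg _) (Finset.mem_univ k)
  rw [h, ← Complex.sq_norm] at h1
  nlinarith [norm_nonneg (ζ k)]

lemma exists_unit_vec {d : ℕ} (hd : 1 ≤ d) : ∃ ξ : Fin d → ℂ, enorm2 ξ = 1 := by
  refine ⟨fun j => if j = ⟨0, hd⟩ then 1 else 0, ?_⟩
  simp [enorm2, apply_ite Complex.normSq, Finset.sum_ite_eq]

lemma abs_deltaForm_le {d : ℕ} {p : ℝ} (M : Matrix (Fin d) (Fin d) ℂ) {D : ℝ} (hD0 : 0 ≤ D)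
    (hD : ∀ i j, ‖M i j‖ ≤ D) {ζ : Fin d → ℂ} (hζ : enorm2 ζ = 1) :
    |deltaForm p M ζ| ≤ (1 + |1 - 2 / p|) * d ^ 2 * D := by
  have hlam0 : (0:ℝ) ≤ |1 - 2 / p| := abs_nonneg _
  have hd0 : (0:ℝ) ≤ (d:ℝ) := Nat.cast_nonneg d
  have key : ∀ j : Fin d, ‖M.mulVec ζ j *
      (starRingEnd ℂ) (ζ j + Complex.ofReal |1 - 2 / p| * (starRingEnd ℂ) (ζ j))‖
        ≤ ((d:ℝ) * D) * (1 + |1 - 2 / p|) := by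
    intro j
    rw [norm_mul]
    have h1 : ‖M.mulVec ζ j‖ ≤ (d:ℝ) * D := by
      calc ‖M.mulVec ζ j‖ = ‖∑ k, M j k * ζ k‖ := rfl
      _ ≤ ∑ k, ‖M j k * ζ k‖ := norm_sum_le _ _
      _ ≤ ∑ _k : Fin d, D := Finset.sum_le_sum fun k _ => by
            rw [norm_mul]
            calc ‖M j k‖ * ‖ζ k‖ ≤ D * 1 :=
              mul_le_mul (hD j k) (norm_comp_le_one hζ k) (norm_nonneg _) hD0
            _ = D := mul_one D
      _ = (d:ℝ) * D := by simp [Finset.sum_const, Finset.card_univ, nsmul_eq_mul]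
    have h2 : ‖(starRingEnd ℂ) (ζ j + Complex.ofReal |1 - 2 / p| * (starRingEnd ℂ) (ζ j))‖
        ≤ 1 + |1 - 2 / p| := by
      rw [RCLike.norm_conj]
      calc ‖ζ j + Complex.ofReal |1 - 2 / p| * (starRingEnd ℂ) (ζ j)‖
          ≤ ‖ζ j‖ + ‖Complex.ofReal |1 - 2 / p| * (starRingEnd ℂ) (ζ j)‖ := norm_add_le _ _
        _ = ‖ζ j‖ + |1 - 2 / p| * ‖ζ j‖ := by
            rw [norm_mul, RCLike.norm_conj]
            simp [Complex.norm_real, abs_abs]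
        _ ≤ 1 + |1 - 2 / p| * 1 := by
            have := norm_comp_le_one hζ j
            have := norm_nonneg (ζ j)
            nlinarith
        _ = 1 + |1 - 2 / p| := by ring
    exact mul_le_mul h1 h2 (norm_nonneg _) (by positivity)
  unfold deltaForm
  calc |(∑ j, M.mulVec ζ j *
      (starRingEnd ℂ) (ζ j + Complex.ofReal |1 - 2 / p| * (starRingEnd ℂ) (ζ j))).re|
      ≤ ‖∑ j, M.mulVec ζ j *
        (starRingEnd ℂ) (ζ j + Complex.ofReal |1 - 2 / p| * (starRingEnd ℂ) (ζ j))‖ :=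
        Complex.abs_re_le_norm _
    _ ≤ ∑ j, ‖M.mulVec ζ j *
        (starRingEnd ℂ) (ζ j + Complex.ofReal |1 - 2 / p| * (starRingEnd ℂ) (ζ j))‖ :=
        norm_sum_le _ _
    _ ≤ ∑ _j : Fin d, ((d:ℝ) * D) * (1 + |1 - 2 / p|) := Finset.sum_le_sum fun j _ => key j
    _ = (d:ℝ) * (((d:ℝ) * D) * (1 + |1 - 2 / p|)) := by
        simp [Finset.sum_const, Finset.card_univ, nsmul_eq_mul]
    _ = (1 + |1 - 2 / p|) * (d:ℝ) ^ 2 * D := by ring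

lemma normSq_shift_ge {lam : ℝ} (h0 : 0 ≤ lam) (h1 : lam ≤ 1) (z : ℂ) :
    (1 - lam) ^ 2 * Complex.normSq z ≤ Complex.normSq (z + (lam : ℂ) * (starRingEnd ℂ) z) := by
  have ha := norm_sub_norm_le z (-((lam : ℂ) * (starRingEnd ℂ) z))
  rw [norm_neg, sub_neg_eq_add] at ha
  have hb : ‖(lam : ℂ) * (starRingEnd ℂ) z‖ = lam * ‖z‖ := by
    rw [norm_mul, RCLike.norm_conj]
    simp [Complex.norm_real, abs_of_nonneg h0]
  rw [hb] at ha
  have hz0 := norm_nonneg z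
  have hw0 := norm_nonneg (z + (lam : ℂ) * (starRingEnd ℂ) z)
  have e1 : Complex.normSq z = ‖z‖ ^ 2 := by
    rw [← Complex.sq_norm]
  have e2 : Complex.normSq (z + (lam : ℂ) * (starRingEnd ℂ) z)
      = ‖z + (lam : ℂ) * (starRingEnd ℂ) z‖ ^ 2 := by
    rw [← Complex.sq_norm]
  rw [e1, e2]
  have h3 : (1 - lam) * ‖z‖ ≤ ‖z + (lam : ℂ) * (starRingEnd ℂ) z‖ := by nlinarith
  have h4 : (0:ℝ) ≤ (1 - lam) * ‖z‖ := mul_nonneg (by linarith) hz0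
  have h5 := mul_le_mul h3 h3 h4 hw0
  nlinarith [h5]

lemma deltaForm_conjTranspose_ge {d : ℕ} {p : ℝ} (hp : 1 < p)
    (M : Matrix (Fin d) (Fin d) ℂ) {δ : ℝ} (hδ : 0 < δ)
    (hM : ∀ ζ, enorm2 ζ = 1 → δ ≤ deltaForm p M ζ)
    {ξ : Fin d → ℂ} (hξ : enorm2 ξ = 1) :
    (1 - |1 - 2 / p|) / (1 + |1 - 2 / p|) * δ ≤ deltaForm p M.conjTranspose ξ := by
  have hlam0 : (0:ℝ) ≤ |1 - 2 / p| := abs_nonneg _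
  have hlam1 : |1 - 2 / p| < 1 := lam_lt_one hp
  have hpos : (0:ℝ) < 1 - |1 - 2 / p| ^ 2 := by nlinarith
  have hs2 : Real.sqrt (1 - |1 - 2 / p| ^ 2) ^ 2 = 1 - |1 - 2 / p| ^ 2 := Real.sq_sqrt hpos.le
  have hspos : 0 < Real.sqrt (1 - |1 - 2 / p| ^ 2) := Real.sqrt_pos.2 hpos
  rw [deltaForm_conjTranspose hp]
  set lam : ℝ := |1 - 2 / p| with hlamdef
  set η : Fin d → ℂ := fun j =>
    ((Real.sqrt (1 - lam ^ 2) : ℝ) : ℂ)⁻¹ * Complex.I *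
      (ξ j + Complex.ofReal lam * (starRingEnd ℂ) (ξ j)) with hηdef
  -- lower bound on enorm2 η
  have hcomp : ∀ j, (1 - lam ^ 2)⁻¹ * ((1 - lam) ^ 2 * Complex.normSq (ξ j))
      ≤ Complex.normSq (η j) := by
    intro j
    have hnq : Complex.normSq (η j) = (1 - lam ^ 2)⁻¹ *
        Complex.normSq (ξ j + Complex.ofReal lam * (starRingEnd ℂ) (ξ j)) := by
      rw [hηdef]
      simp only [Complex.normSq_mul, Complex.normSq_inv, Complex.normSq_ofReal, Complex.normSq_I]
      rw [show Real.sqrt (1 - lam ^ 2) * Real.sqrt (1 - lam ^ 2)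
        = 1 - lam ^ 2 by rw [← sq]; exact hs2]
      ring
    rw [hnq]
    have h := normSq_shift_ge hlam0 hlam1.le (ξ j)
    have hinv : (0:ℝ) ≤ (1 - lam ^ 2)⁻¹ := by positivity
    exact mul_le_mul_of_nonneg_left h hinv
  have hne : (1:ℝ) - lam ^ 2 ≠ 0 := hpos.ne'
  have hne1 : (1:ℝ) + lam ≠ 0 := by linarith
  have he : (1 - lam) / (1 + lam) ≤ enorm2 η := by
    have hsum : ∑ j, (1 - lam ^ 2)⁻¹ * ((1 - lam) ^ 2 * Complex.normSq (ξ j))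
        ≤ enorm2 η := Finset.sum_le_sum fun j _ => hcomp j
    have hval : ∑ j, (1 - lam ^ 2)⁻¹ * ((1 - lam) ^ 2 * Complex.normSq (ξ j))
        = (1 - lam) / (1 + lam) := by
      rw [← Finset.mul_sum, ← Finset.mul_sum, show (∑ j, Complex.normSq (ξ j)) = enorm2 ξ from rfl,
        hξ, mul_one, show (1:ℝ) - lam ^ 2 = (1 - lam) * (1 + lam) by ring]
      rw [mul_inv, div_eq_mul_inv]
      have h1lne : (1:ℝ) - lam ≠ 0 := by linarith
      field_simp
    rw [hval] at hsum
    exact hsum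
  have hkpos : (0:ℝ) < (1 - lam) / (1 + lam) := div_pos (by linarith) (by linarith)
  have hepos : 0 < enorm2 η := lt_of_lt_of_le hkpos he
  set t : ℝ := Real.sqrt (enorm2 η) with htdef
  have htpos : 0 < t := Real.sqrt_pos.2 hepos
  have ht2 : t ^ 2 = enorm2 η := Real.sq_sqrt hepos.le
  set ζ : Fin d → ℂ := fun j => ((t⁻¹ : ℝ) : ℂ) * η j with hζdef
  have hζunit : enorm2 ζ = 1 := by
    rw [hζdef, enorm2_smul, ← ht2]
    field_simp
  have hηζ : η = fun j => ((t : ℝ) : ℂ) * ζ j := by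
    funext j
    rw [hζdef]
    push_cast
    rw [← mul_assoc, mul_inv_cancel₀ (by exact_mod_cast htpos.ne' : ((t:ℝ):ℂ) ≠ 0), one_mul]
  calc (1 - lam) / (1 + lam) * δ ≤ enorm2 η * δ :=
        mul_le_mul_of_nonneg_right he hδ.le
    _ ≤ deltaForm p M η := by
        have heq : deltaForm p M η = enorm2 η * deltaForm p M ζ := by
          conv_lhs => rw [hηζ]
          rw [deltaForm_smul, ht2]
        rw [heq]
        exact mul_le_mul_of_nonneg_left (hM ζ hζunit) hepos.le

/-- `Δ_p(A) = essinf_{x ∈ Ω} min_{|ξ| = 1} Re⟨A(x)ξ, ξ + |1 - 2/p| ξ̄⟩`. -/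
noncomputable def deltaP {d : ℕ} (Ω : Set (EuclideanSpace ℝ (Fin d))) (p : ℝ)
    (A : EuclideanSpace ℝ (Fin d) → Matrix (Fin d) (Fin d) ℂ) : ℝ :=
  essInf (fun x => sInf (deltaForm p (A x) '' {ξ : Fin d → ℂ | enorm2 ξ = 1}))
    (volume.restrict Ω)

/-- Perturbed `p`-ellipticity is invariant under taking pointwise adjoints:
if `Δ_p(A - α(pq/4)I) > 0` then `Δ_p(A* - α(pq/4)I) > 0`. -/
theorem deltaP_perturbed_adjoint
    {d : ℕ} (hd : 1 ≤ d)
    (Ω : Set (EuclideanSpace ℝ (Fin d))) (hΩopen : IsOpen Ω) (hΩpos : 0 < volume Ω)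
    (p q : ℝ) (hp : 1 < p) (hq : q = p / (p - 1))
    (α : ℝ) (hα : 0 ≤ α)
    (A : EuclideanSpace ℝ (Fin d) → Matrix (Fin d) (Fin d) ℂ)
    (hAmeas : ∀ i j, Measurable fun x => A x i j)
    (hAbdd : ∃ C : ℝ, ∀ᵐ x ∂(volume.restrict Ω), ∀ i j, ‖A x i j‖ ≤ C)
    (hA : 0 < deltaP Ω p
      (fun x => A x - ((α * (p * q / 4) : ℝ) : ℂ) • (1 : Matrix (Fin d) (Fin d) ℂ))) :
    0 < deltaP Ω p
      (fun x => (A x).conjTranspose -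
        ((α * (p * q / 4) : ℝ) : ℂ) • (1 : Matrix (Fin d) (Fin d) ℂ)) := by
  classical
  have hlam0 : (0:ℝ) ≤ |1 - 2 / p| := abs_nonneg _
  have hlam1 : |1 - 2 / p| < 1 := lam_lt_one hp
  obtain ⟨ξ₀, hξ₀⟩ := exists_unit_vec hd
  obtain ⟨C, hC⟩ := hAbdd
  set c0 : ℂ := ((α * (p * q / 4) : ℝ) : ℂ) with hc0def
  set B : EuclideanSpace ℝ (Fin d) → Matrix (Fin d) (Fin d) ℂ :=
    fun x => A x - c0 • 1 with hBdef
  have hBH : (fun x => (A x).conjTranspose - c0 • (1 : Matrix (Fin d) (Fin d) ℂ))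
      = fun x => (B x).conjTranspose := by
    funext x
    rw [hBdef]
    rw [Matrix.conjTranspose_sub, Matrix.conjTranspose_smul, Matrix.conjTranspose_one]
    congr 2
    rw [hc0def, Complex.star_def, Complex.conj_ofReal]
  rw [hBH]
  unfold deltaP at hA ⊢
  set D : ℝ := |C| + ‖c0‖ with hDdef
  have hD0 : (0:ℝ) ≤ D := by positivity
  set K : ℝ := (1 + |1 - 2 / p|) * (d:ℝ) ^ 2 * D with hKdef
  have hK0 : (0:ℝ) ≤ K := by positivity
  have hent : ∀ x, (∀ i j, ‖A x i j‖ ≤ C) → ∀ i j, ‖B x i j‖ ≤ D := by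
    intro x hx i j
    rw [hBdef]
    have h1 : ‖(c0 • (1 : Matrix (Fin d) (Fin d) ℂ)) i j‖ ≤ ‖c0‖ := by
      simp only [Matrix.smul_apply, Matrix.one_apply, smul_eq_mul]
      by_cases h : i = j <;> simp [h]
    calc ‖(A x - c0 • 1) i j‖ = ‖A x i j - (c0 • (1 : Matrix (Fin d) (Fin d) ℂ)) i j‖ := rfl
      _ ≤ ‖A x i j‖ + ‖(c0 • (1 : Matrix (Fin d) (Fin d) ℂ)) i j‖ := norm_sub_le _ _
      _ ≤ |C| + ‖c0‖ := add_le_add ((hx i j).trans (le_abs_self C)) h1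
  have hDBH : ∀ᵐ x ∂(volume.restrict Ω), ∀ i j, ‖(B x).conjTranspose i j‖ ≤ D := by
    filter_upwards [hC] with x hx i j
    rw [Matrix.conjTranspose_apply, norm_star]
    exact hent x hx j i
  have hDB : ∀ᵐ x ∂(volume.restrict Ω), ∀ i j, ‖B x i j‖ ≤ D := by
    filter_upwards [hC] with x hx
    exact hent x hx
  have hglb : ∀ᵐ x ∂(volume.restrict Ω),
      -K ≤ sInf (deltaForm p (B x) '' {ξ : Fin d → ℂ | enorm2 ξ = 1}) := by
    filter_upwards [hDB] with x hx
    refine le_csInf ⟨_, Set.mem_image_of_mem _ hξ₀⟩ ?_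
    rintro b ⟨ζ, hζ, rfl⟩
    have h1 := abs_deltaForm_le (p := p) (B x) hD0 hx hζ
    have h2 := neg_abs_le (deltaForm p (B x) ζ)
    rw [hKdef]; linarith
  have h1 : ∀ᵐ x ∂(volume.restrict Ω),
      essInf (fun x => sInf (deltaForm p (B x) '' {ξ : Fin d → ℂ | enorm2 ξ = 1}))
          (volume.restrict Ω)
        ≤ sInf (deltaForm p (B x) '' {ξ : Fin d → ℂ | enorm2 ξ = 1}) :=
    ae_essInf_le ⟨-K, by simpa [Filter.eventually_map] using hglb⟩
  have hgub : ∀ᵐ x ∂(volume.restrict Ω),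
      sInf (deltaForm p (B x).conjTranspose '' {ξ : Fin d → ℂ | enorm2 ξ = 1}) ≤ K := by
    filter_upwards [hDBH] with x hx
    by_cases hbb : BddBelow (deltaForm p (B x).conjTranspose '' {ξ : Fin d → ℂ | enorm2 ξ = 1})
    · have h := csInf_le hbb (Set.mem_image_of_mem _ hξ₀)
      have h1 := abs_deltaForm_le (p := p) ((B x).conjTranspose) hD0 hx hξ₀
      have h2 := le_abs_self (deltaForm p (B x).conjTranspose ξ₀)
      rw [hKdef]; linarith
    · rw [Real.sInf_of_not_bddBelow hbb]; exact hK0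
  have hmain : ∀ᵐ x ∂(volume.restrict Ω),
      (1 - |1 - 2 / p|) / (1 + |1 - 2 / p|) *
        essInf (fun x => sInf (deltaForm p (B x) '' {ξ : Fin d → ℂ | enorm2 ξ = 1}))
          (volume.restrict Ω)
      ≤ sInf (deltaForm p (B x).conjTranspose '' {ξ : Fin d → ℂ | enorm2 ξ = 1}) := by
    filter_upwards [h1] with x hx
    have hM : ∀ ζ, enorm2 ζ = 1 → essInf (fun x =>
        sInf (deltaForm p (B x) '' {ξ : Fin d → ℂ | enorm2 ξ = 1})) (volume.restrict Ω)
        ≤ deltaForm p (B x) ζ := by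
      intro ζ hζ
      by_cases hbb : BddBelow (deltaForm p (B x) '' {ξ : Fin d → ℂ | enorm2 ξ = 1})
      · exact le_trans hx (csInf_le hbb (Set.mem_image_of_mem _ hζ))
      · exfalso
        rw [Real.sInf_of_not_bddBelow hbb] at hx
        exact absurd (lt_of_lt_of_le hA hx) (lt_irrefl 0)
    refine le_csInf ⟨_, Set.mem_image_of_mem _ hξ₀⟩ ?_
    rintro b ⟨ξ, hξ, rfl⟩
    exact deltaForm_conjTranspose_ge hp (B x) hA hM hξ
  have hμne : volume.restrict Ω ≠ 0 := by
    intro h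
    have h2 := Measure.restrict_apply_univ (μ := (volume : Measure (EuclideanSpace ℝ (Fin d)))) Ω
    rw [h] at h2
    simp only [Measure.coe_zero, Pi.zero_apply] at h2
    exact absurd h2.symm hΩpos.ne'
  haveI : (ae (volume.restrict Ω)).NeBot := ae_neBot.2 hμne
  have hcb : Filter.IsCoboundedUnder (· ≥ ·) (ae (volume.restrict Ω))
      (fun x => sInf (deltaForm p (B x).conjTranspose '' {ξ : Fin d → ℂ | enorm2 ξ = 1})) :=
    Filter.isCoboundedUnder_ge_of_eventually_le _ hgub
  have hfin := Filter.le_liminf_of_le hcb hmain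
  have hkpos : (0:ℝ) < (1 - |1 - 2 / p|) / (1 + |1 - 2 / p|) :=
    div_pos (by linarith) (by linarith)
  calc (0:ℝ) < (1 - |1 - 2 / p|) / (1 + |1 - 2 / p|) *
        essInf (fun x => sInf (deltaForm p (B x) '' {ξ : Fin d → ℂ | enorm2 ξ = 1}))
          (volume.restrict Ω) := mul_pos hkpos hA
    _ ≤ _ := hfin
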